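/- Let μ be a centered Gaussian measure on a real separable Hilbert space H with finite second moment. Then the covariance operator K_μ is trace class, with trace equal to ∫_H ‖x‖² dμ(x). -/

import Mathlib

open MeasureTheory ProbabilityTheory Filter
open scoped RealInnerProductSpace NNReal

/-! Summing `⟪K eᵢ, eᵢ⟫ = ∫ ⟪x, eᵢ⟫² dμ` over a Hilbert basis and using Parseval,
`∑ᵢ ⟪x, eᵢ⟫² = ‖x‖²`, the trace is `∫ ‖x‖² dμ`, provided sum and integral may be exchanged:
they may, since the terms are nonnegative and `‖x‖²` is integrable. Separability makes the
basis countable, which the exchange needs. -/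

theorem Orthonormal.one_le_dist {𝕜 E ι : Type*} [RCLike 𝕜] [NormedAddCommGroup E]
    [InnerProductSpace 𝕜 E] {v : ι → E} (hv : Orthonormal 𝕜 v) {i j : ι} (hij : i ≠ j) :
    1 ≤ dist (v i) (v j) := by
  have hsq : dist (v i) (v j) ^ 2 = 2 := by
    rw [dist_eq_norm, @norm_sub_sq 𝕜, hv.1 i, hv.1 j, hv.2 hij]
    norm_num
  nlinarith [dist_nonneg (x := v i) (y := v j)]

theorem Orthonormal.countable {𝕜 E ι : Type*} [RCLike 𝕜] [NormedAddCommGroup E]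
    [InnerProductSpace 𝕜 E] [TopologicalSpace.SeparableSpace E] {v : ι → E}
    (hv : Orthonormal 𝕜 v) : Countable ι := by
  refine Pairwise.countable_of_isOpen_disjoint (s := fun i => Metric.ball (v i) (1 / 2))
    (fun i j hij => Metric.ball_disjoint_ball ?_) (fun _ => Metric.isOpen_ball)
    (fun i => ⟨v i, Metric.mem_ball_self one_half_pos⟩)
  linarith [hv.one_le_dist hij]

theorem HilbertBasis.hasSum_inner_mul_inner_self {ι E : Type*} [NormedAddCommGroup E]
    [InnerProductSpace ℝ E] (e : HilbertBasis ι ℝ E) (x : E) :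
    HasSum (fun i => ⟪x, e i⟫ * ⟪x, e i⟫) (‖x‖ ^ 2) := by
  simpa only [real_inner_comm x, real_inner_self_eq_norm_sq] using e.hasSum_inner_mul_inner x x

theorem MeasureTheory.hasSum_integral_of_nonneg {α ι : Type*} [MeasurableSpace α]
    {μ : Measure α} [Countable ι] {F : ι → α → ℝ} {f : α → ℝ}
    (hF_meas : ∀ i, AEStronglyMeasurable (F i) μ)
    (hF_nonneg : ∀ i, 0 ≤ᵐ[μ] F i) (hf : Integrable f μ)
    (h_lim : ∀ᵐ a ∂μ, HasSum (fun i => F i a) (f a)) :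
    HasSum (fun i => ∫ a, F i a ∂μ) (∫ a, f a ∂μ) :=
  hasSum_integral_of_dominated_convergence F hF_meas
    (fun i => (hF_nonneg i).mono fun _ ha => (Real.norm_of_nonneg ha).le)
    (h_lim.mono fun _ h => h.summable) (hf.congr (h_lim.mono fun _ h => h.tsum_eq.symm)) h_lim

theorem covariance_operator_traceClass_general
    {H : Type*} [NormedAddCommGroup H] [InnerProductSpace ℝ H]
    [TopologicalSpace.SeparableSpace H] [MeasurableSpace H] [BorelSpace H]
    (μ : Measure H)
    (hmom : MemLp (fun x : H => x) 2 μ)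
    (K : H →ₗ[ℝ] H)
    (hK : ∀ f g : H, ⟪K f, g⟫ = ∫ x, ⟪x, f⟫ * ⟪x, g⟫ ∂μ) :
    ∀ (ι : Type) (e : HilbertBasis ι ℝ H),
      Summable (fun i => ⟪K (e i), e i⟫) ∧
      ∑' i, ⟪K (e i), e i⟫ = ∫ x, ‖x‖ ^ 2 ∂μ := by
  intro ι e
  have : Countable ι := e.orthonormal.countable
  have hint : Integrable (fun x : H => ‖x‖ ^ 2) μ := hmom.integrable_norm_pow two_ne_zero
  have htrace : HasSum (fun i => ⟪K (e i), e i⟫) (∫ x, ‖x‖ ^ 2 ∂μ) := by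
    simp only [hK]
    exact hasSum_integral_of_nonneg
      (fun _ => ((continuous_id.inner continuous_const).mul
        (continuous_id.inner continuous_const)).aestronglyMeasurable)
      (fun _ => ae_of_all _ fun _ => mul_self_nonneg _) hint
      (ae_of_all _ e.hasSum_inner_mul_inner_self)
  exact ⟨htrace.summable, htrace.tsum_eq⟩

/-- The covariance operator of a centered Gaussian measure with finite second
moment is trace class, with trace `∫ ‖x‖² dμ`. -/
theorem covariance_operator_traceClass
    {H : Type*} [NormedAddCommGroup H] [InnerProductSpace ℝ H] [CompleteSpace H]
    [TopologicalSpace.SeparableSpace H] [MeasurableSpace H] [BorelSpace H]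
    (μ : Measure H) [IsProbabilityMeasure μ]
    (hgauss : ∀ f : H, ∃ v : ℝ≥0, μ.map (fun x => ⟪x, f⟫) = gaussianReal 0 v)
    (hmom : MemLp (fun x : H => x) 2 μ)
    (K : H →ₗ[ℝ] H)
    (hK : ∀ f g : H, ⟪K f, g⟫ = ∫ x, ⟪x, f⟫ * ⟪x, g⟫ ∂μ) :
    ∀ (ι : Type) (e : HilbertBasis ι ℝ H),
      Summable (fun i => ⟪K (e i), e i⟫) ∧
      ∑' i, ⟪K (e i), e i⟫ = ∫ x, ‖x‖ ^ 2 ∂μ :=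
  covariance_operator_traceClass_general μ hmom K hK
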